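/- Let p > 1, ζ > 3(1 − 1/p) and T > 0. For every η > 0 there exists a constant C_η > 0 such that for all functions H, F, G : [0,T] × ℤ³ → [0,∞) that are measurable in the time variable for each k ∈ ℤ³, one has ∑_{k∈ℤ³} ⟨k⟩^{ζ p} ( ∫_0^T H(τ,k) ( ∑_{l∈ℤ³} F(τ,k−l) G(τ,l) ) dτ )^{p/2} ≤ η ∑_{k∈ℤ³} ⟨k⟩^{ζ p} ( ∫_0^T H(τ,k)² dτ )^{p/2} + C_η · A_F^p · B_G^p. -/

import Mathlib

open scoped ENNReal
open MeasureTheory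

/-- The Japanese bracket `⟨k⟩ = (1 + |k|²)^{1/2}` of a lattice point `k ∈ ℤ³`,
where `|k|` is the Euclidean norm. -/
noncomputable def jap (k : Fin 3 → ℤ) : ℝ := Real.sqrt (1 + ∑ i, ((k i : ℝ)) ^ 2)

/-- The Japanese bracket, viewed in `[0,∞]`. -/
noncomputable def japE (k : Fin 3 → ℤ) : ℝ≥0∞ := ENNReal.ofReal (jap k)

/-- `A_F = (∑_{k∈ℤ³} ⟨k⟩^{ζp} (sup_{τ∈[0,T]} F(τ,k))^p)^{1/p}`, possibly `+∞`. -/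
noncomputable def Anorm (ζ p T : ℝ) (F : ℝ → (Fin 3 → ℤ) → ℝ) : ℝ≥0∞ :=
  (∑' k, japE k ^ (ζ * p) *
    (⨆ τ ∈ Set.Icc (0 : ℝ) T, ENNReal.ofReal (F τ k)) ^ p) ^ (1 / p)

/-- `B_F = (∑_{k∈ℤ³} ⟨k⟩^{ζp} (∫_0^T F(τ,k)² dτ)^{p/2})^{1/p}`, possibly `+∞`. -/
noncomputable def Bnorm (ζ p T : ℝ) (F : ℝ → (Fin 3 → ℤ) → ℝ) : ℝ≥0∞ :=
  (∑' k, japE k ^ (ζ * p) *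
    (∫⁻ τ in Set.Icc (0 : ℝ) T, ENNReal.ofReal (F τ k) ^ 2) ^ (p / 2)) ^ (1 / p)

/-!
For each `k`, Cauchy–Schwarz in `τ` and Minkowski's inequality for the series in `l` bound the
time integral by `‖H(·,k)‖₂ · c_k`, where `c = f ⋆ g` is the lattice convolution of
`f = sup_τ F` and `g = ‖G(·,l)‖₂`; the AM–GM inequality `√(xy) ≤ ηx + η⁻¹y` then splits off the
`H` term. What remains is that `ℓ^p` with weight `⟨k⟩^ζ` is closed under convolution when
`ζq > 3`, `1/p + 1/q = 1` (which is `ζ > 3(1 - 1/p)`): since `⟨k⟩^ζ ≤ 2^ζ (⟨k-l⟩^ζ + ⟨l⟩^ζ)`, the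
weight falls on one factor, Young's inequality `ℓ^p ⋆ ℓ^1 ⊆ ℓ^p` applies, and Hölder bounds the
`ℓ^1` norm of the other factor by its weighted `ℓ^p` norm times `(∑ₖ ⟨k⟩^(-ζq))^(1/q) < ∞`.
-/

namespace ENNReal

theorem inner_le_Lp_mul_Lq_tsum {ι : Type*} {p q : ℝ} (hpq : p.HolderConjugate q)
    (f g : ι → ℝ≥0∞) :
    ∑' i, f i * g i ≤ (∑' i, f i ^ p) ^ (1 / p) * (∑' i, g i ^ q) ^ (1 / q) := by
  let _ : MeasurableSpace ι := ⊤
  simpa only [lintegral_count, Pi.mul_apply] using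
    lintegral_mul_le_Lp_mul_Lq (Measure.count (α := ι)) hpq measurable_from_top.aemeasurable
      measurable_from_top.aemeasurable

theorem rpow_tsum_mul_le {ι : Type*} {p : ℝ} (hp : 1 < p) (a w : ι → ℝ≥0∞) :
    (∑' i, a i * w i) ^ p ≤ (∑' i, a i ^ p * w i) * (∑' i, w i) ^ (p - 1) := by
  have hpq := Real.HolderConjugate.conjExponent hp
  set q := p.conjExponent
  have hp0 := hpq.pos
  have hq0 := hpq.symm.pos
  have hsplit : ∀ i, a i * w i = (a i * w i ^ (1 / p)) * w i ^ (1 / q) := fun i => by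
    rw [mul_assoc, ← rpow_add_of_nonneg _ _ (by positivity) (by positivity),
      one_div, one_div, hpq.inv_add_inv_eq_one, rpow_one]
  have hholder :=
    inner_le_Lp_mul_Lq_tsum hpq (fun i => a i * w i ^ (1 / p)) (fun i => w i ^ (1 / q))
  simp only [← hsplit, mul_rpow_of_nonneg _ _ hp0.le, ← rpow_mul,
    one_div_mul_cancel hp0.ne', one_div_mul_cancel hq0.ne', rpow_one] at hholder
  calc (∑' i, a i * w i) ^ p
      ≤ ((∑' i, a i ^ p * w i) ^ (1 / p) * (∑' i, w i) ^ (1 / q)) ^ p := by gcongr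
    _ = (∑' i, a i ^ p * w i) * (∑' i, w i) ^ (p - 1) := by
      rw [mul_rpow_of_nonneg _ _ hp0.le, ← rpow_mul, ← rpow_mul, one_div_mul_cancel hp0.ne',
        rpow_one, one_div_mul_eq_div, hpq.div_conj_eq_sub_one]

theorem tsum_conv_rpow_le {G : Type*} [AddGroup G] {p : ℝ} (hp : 1 < p) (u w : G → ℝ≥0∞) :
    ∑' k, (∑' l, u (k - l) * w l) ^ p ≤ (∑' k, u k ^ p) * (∑' k, w k) ^ p := by
  calc ∑' k, (∑' l, u (k - l) * w l) ^ p
      ≤ ∑' k, (∑' l, u (k - l) ^ p * w l) * (∑' l, w l) ^ (p - 1) :=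
        ENNReal.tsum_le_tsum fun k => rpow_tsum_mul_le hp _ _
    _ = (∑' l, (∑' k, u (k - l) ^ p) * w l) * (∑' l, w l) ^ (p - 1) := by
        rw [ENNReal.tsum_mul_right, ENNReal.tsum_comm]; simp_rw [ENNReal.tsum_mul_right]
    _ = (∑' k, u k ^ p) * (∑' l, w l) * (∑' l, w l) ^ (p - 1) := by
        rw [← ENNReal.tsum_mul_left]
        exact congrArg (· * _) <| tsum_congr fun l =>
          congrArg (· * w l) ((Equiv.subRight l).tsum_eq fun k => u k ^ p)
    _ = (∑' k, u k ^ p) * (∑' k, w k) ^ p := by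
        rw [mul_assoc]
        congr 1
        conv_rhs => rw [show p = 1 + (p - 1) by ring,
          rpow_add_of_nonneg _ _ zero_le_one (by linarith), rpow_one]

theorem rpow_tsum_le_of_weight {ι : Type*} {p q : ℝ} (hpq : p.HolderConjugate q)
    {v : ι → ℝ≥0∞} (hv0 : ∀ i, v i ≠ 0) (hvtop : ∀ i, v i ≠ ⊤) (u : ι → ℝ≥0∞) :
    (∑' i, u i) ^ p ≤ (∑' i, v i ^ (-q)) ^ (p / q) * ∑' i, (v i * u i) ^ p := by
  have hp0 := hpq.pos
  have hholder := inner_le_Lp_mul_Lq_tsum hpq.symm (fun i => (v i)⁻¹) (fun i => v i * u i)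
  simp only [← mul_assoc, ENNReal.inv_mul_cancel (hv0 _) (hvtop _), one_mul, inv_rpow,
    ← rpow_neg] at hholder
  calc (∑' i, u i) ^ p
      ≤ ((∑' i, v i ^ (-q)) ^ (1 / q) * (∑' i, (v i * u i) ^ p) ^ (1 / p)) ^ p := by gcongr
    _ = (∑' i, v i ^ (-q)) ^ (p / q) * ∑' i, (v i * u i) ^ p := by
      rw [mul_rpow_of_nonneg _ _ hp0.le, ← rpow_mul, ← rpow_mul, one_div_mul_cancel hp0.ne',
        rpow_one, one_div_mul_eq_div]

theorem tsum_weight_mul_conv_rpow_le {G : Type*} [AddCommGroup G] {p q : ℝ}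
    (hpq : p.HolderConjugate q) {w : G → ℝ≥0∞} {D : ℝ≥0∞} (hw0 : ∀ k, w k ≠ 0)
    (hwtop : ∀ k, w k ≠ ⊤) (hw : ∀ k l, w k ≤ D * (w (k - l) + w l)) (f g : G → ℝ≥0∞) :
    ∑' k, (w k * ∑' l, f (k - l) * g l) ^ p ≤
      (2 * D) ^ p * (∑' k, w k ^ (-q)) ^ (p / q) * (∑' k, (w k * f k) ^ p) *
        ∑' k, (w k * g k) ^ p := by
  have hp0 := hpq.nonneg
  set S := ∑' k, w k ^ (-q)
  set X := ∑' k, (w k * f k) ^ p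
  set Y := ∑' k, (w k * g k) ^ p
  set P : G → ℝ≥0∞ := fun k => ∑' l, (w (k - l) * f (k - l)) * g l
  set Q : G → ℝ≥0∞ := fun k => ∑' l, (w (k - l) * g (k - l)) * f l
  have hPQ : ∀ k, w k * ∑' l, f (k - l) * g l ≤ D * (P k + Q k) := by
    intro k
    have hQ : Q k = ∑' l, f (k - l) * (w l * g l) := by
      rw [← (Equiv.subLeft k).tsum_eq (fun l => f (k - l) * (w l * g l))]
      refine tsum_congr fun l => ?_
      rw [Equiv.subLeft_apply, _root_.sub_sub_cancel, mul_comm]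
    rw [hQ, ← ENNReal.tsum_add, ← ENNReal.tsum_mul_left, ← ENNReal.tsum_mul_left]
    refine ENNReal.tsum_le_tsum fun l => ?_
    calc w k * (f (k - l) * g l) ≤ D * (w (k - l) + w l) * (f (k - l) * g l) := by
          gcongr; exact hw k l
      _ = D * (w (k - l) * f (k - l) * g l + f (k - l) * (w l * g l)) := by ring
  have hP : ∑' k, P k ^ p ≤ X * (S ^ (p / q) * Y) := (tsum_conv_rpow_le hpq.lt _ _).trans
    (mul_le_mul_right (rpow_tsum_le_of_weight hpq hw0 hwtop g) X)
  have hQ : ∑' k, Q k ^ p ≤ Y * (S ^ (p / q) * X) := (tsum_conv_rpow_le hpq.lt _ _).trans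
    (mul_le_mul_right (rpow_tsum_le_of_weight hpq hw0 hwtop f) Y)
  have htwo : (2 : ℝ≥0∞) ^ (p - 1) * 2 = 2 ^ p := by
    conv_rhs => rw [← sub_add_cancel p 1, rpow_add _ _ two_ne_zero ofNat_ne_top, rpow_one]
  calc ∑' k, (w k * ∑' l, f (k - l) * g l) ^ p
      ≤ ∑' k, D ^ p * (2 ^ (p - 1) * (P k ^ p + Q k ^ p)) := ENNReal.tsum_le_tsum fun k =>
        calc (w k * ∑' l, f (k - l) * g l) ^ p ≤ D ^ p * (P k + Q k) ^ p := by
              rw [← mul_rpow_of_nonneg _ _ hp0]; exact rpow_le_rpow (hPQ k) hp0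
          _ ≤ D ^ p * (2 ^ (p - 1) * (P k ^ p + Q k ^ p)) := by
              gcongr; exact rpow_add_le_mul_rpow_add_rpow _ _ hpq.lt.le
    _ = D ^ p * 2 ^ (p - 1) * (∑' k, P k ^ p + ∑' k, Q k ^ p) := by
        rw [ENNReal.tsum_mul_left, ENNReal.tsum_mul_left, ENNReal.tsum_add, mul_assoc]
    _ ≤ D ^ p * 2 ^ (p - 1) * (X * (S ^ (p / q) * Y) + Y * (S ^ (p / q) * X)) := by
        gcongr
    _ = (2 * D) ^ p * S ^ (p / q) * X * Y := by
        rw [mul_rpow_of_nonneg _ _ hp0, ← htwo]; ring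

section Integral

variable {α ι : Type*} [MeasurableSpace α] {μ : Measure α}

theorem lintegral_Lp_finset_sum_le {p : ℝ} (hp : 1 ≤ p) {f : ι → α → ℝ≥0∞}
    (hf : ∀ i, AEMeasurable (f i) μ) (s : Finset ι) :
    (∫⁻ a, (∑ i ∈ s, f i a) ^ p ∂μ) ^ (1 / p) ≤ ∑ i ∈ s, (∫⁻ a, f i a ^ p ∂μ) ^ (1 / p) := by
  induction s using Finset.cons_induction with
  | empty => simp [zero_rpow_of_pos, zero_lt_one.trans_le hp]
  | cons i s hi ih =>
    simp only [Finset.sum_cons]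
    calc _ ≤ (∫⁻ a, f i a ^ p ∂μ) ^ (1 / p) + (∫⁻ a, (∑ j ∈ s, f j a) ^ p ∂μ) ^ (1 / p) :=
          lintegral_Lp_add_le (hf i) (Finset.aemeasurable_fun_sum s fun j _ => hf j) hp
      _ ≤ _ := by gcongr

theorem lintegral_Lp_tsum_le [Countable ι] {p : ℝ} (hp : 1 ≤ p) {f : ι → α → ℝ≥0∞}
    (hf : ∀ i, AEMeasurable (f i) μ) :
    (∫⁻ a, (∑' i, f i a) ^ p ∂μ) ^ (1 / p) ≤ ∑' i, (∫⁻ a, f i a ^ p ∂μ) ^ (1 / p) := by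
  have hp0 : 0 < p := zero_lt_one.trans_le hp
  have hsup : ∀ a, (∑' i, f i a) ^ p = ⨆ s : Finset ι, (∑ i ∈ s, f i a) ^ p := fun a => by
    rw [ENNReal.tsum_eq_iSup_sum]
    exact (orderIsoRpow p hp0).map_iSup fun s => ∑ i ∈ s, f i a
  have hmono : Monotone fun (s : Finset ι) a => (∑ i ∈ s, f i a) ^ p := fun s t hst a =>
    rpow_le_rpow (Finset.sum_le_sum_of_subset hst) hp0.le
  simp_rw [hsup]
  rw [lintegral_iSup_directed
    (fun s => (Finset.aemeasurable_fun_sum s fun i _ => hf i).pow_const p) hmono.directed_le]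
  have hfin : ∀ t : Finset ι,
      ∫⁻ a, (∑ i ∈ t, f i a) ^ p ∂μ ≤ (∑' i, (∫⁻ a, f i a ^ p ∂μ) ^ (1 / p)) ^ p := fun t => by
    rw [← rpow_inv_le_iff hp0, ← one_div]
    exact (lintegral_Lp_finset_sum_le hp hf t).trans (ENNReal.sum_le_tsum t)
  calc (⨆ t : Finset ι, ∫⁻ a, (∑ i ∈ t, f i a) ^ p ∂μ) ^ (1 / p)
      ≤ ((∑' i, (∫⁻ a, f i a ^ p ∂μ) ^ (1 / p)) ^ p) ^ (1 / p) := by gcongr; exact iSup_le hfin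
    _ = ∑' i, (∫⁻ a, f i a ^ p ∂μ) ^ (1 / p) := by
      rw [← rpow_mul, mul_one_div_cancel hp0.ne', rpow_one]

theorem lintegral_mul_tsum_mul_le [Countable ι] {s : Set α} (hs : MeasurableSet s)
    {h : α → ℝ≥0∞} (hh : AEMeasurable h (μ.restrict s)) (u : ι → α → ℝ≥0∞)
    {v : ι → α → ℝ≥0∞} (hv : ∀ i, AEMeasurable (v i) (μ.restrict s)) :
    ∫⁻ a in s, h a * ∑' i, u i a * v i a ∂μ ≤
      (∫⁻ a in s, h a ^ 2 ∂μ) ^ (1 / 2 : ℝ) *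
        ∑' i, (⨆ a ∈ s, u i a) * (∫⁻ a in s, v i a ^ 2 ∂μ) ^ (1 / 2 : ℝ) := by
  set c : ι → ℝ≥0∞ := fun i => ⨆ a ∈ s, u i a
  have hcv : ∀ i, AEMeasurable (fun a => c i * v i a) (μ.restrict s) := fun i => (hv i).const_mul _
  have hscale : ∀ i, (∫⁻ a in s, (c i * v i a) ^ (2 : ℝ) ∂μ) ^ (1 / 2 : ℝ) =
      c i * (∫⁻ a in s, v i a ^ 2 ∂μ) ^ (1 / 2 : ℝ) := by
    intro i
    simp_rw [mul_rpow_of_nonneg _ _ zero_le_two]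
    rw [lintegral_const_mul'' _ ((hv i).pow_const _), mul_rpow_of_nonneg _ _ (by norm_num),
      ← rpow_mul]
    norm_num [rpow_two]
  calc ∫⁻ a in s, h a * ∑' i, u i a * v i a ∂μ
      ≤ ∫⁻ a in s, h a * ∑' i, c i * v i a ∂μ := by
        refine lintegral_mono_ae ?_
        filter_upwards [ae_restrict_mem hs] with a ha
        gcongr with i
        exact le_iSup₂ (f := fun a (_ : a ∈ s) => u i a) a ha
    _ ≤ (∫⁻ a in s, h a ^ 2 ∂μ) ^ (1 / 2 : ℝ) *
          (∫⁻ a in s, (∑' i, c i * v i a) ^ (2 : ℝ) ∂μ) ^ (1 / 2 : ℝ) := by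
        simpa only [rpow_two, Pi.mul_apply] using
          lintegral_mul_le_Lp_mul_Lq _ Real.HolderConjugate.two_two hh (AEMeasurable.tsum hcv)
    _ ≤ (∫⁻ a in s, h a ^ 2 ∂μ) ^ (1 / 2 : ℝ) *
          ∑' i, (∫⁻ a in s, (c i * v i a) ^ (2 : ℝ) ∂μ) ^ (1 / 2 : ℝ) := by
        gcongr; exact lintegral_Lp_tsum_le one_le_two hcv
    _ = _ := by simp only [hscale, c]

end Integral

theorem rpow_half_mul_rpow_half_le {ε : ℝ≥0∞} (hε : ε ≠ 0) (hε' : ε ≠ ⊤) (x y : ℝ≥0∞) :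
    x ^ (1 / 2 : ℝ) * y ^ (1 / 2 : ℝ) ≤ ε * x + ε⁻¹ * y := by
  have hhalf : (0 : ℝ) ≤ 1 / 2 := by norm_num
  have hamgm (a b : ℝ≥0∞) : a ^ (1 / 2 : ℝ) * b ^ (1 / 2 : ℝ) ≤ a + b :=
    calc a ^ (1 / 2 : ℝ) * b ^ (1 / 2 : ℝ) ≤ max a b ^ (1 / 2 : ℝ) * max a b ^ (1 / 2 : ℝ) := by
          gcongr <;> simp
      _ = max a b := by rw [← rpow_add_of_nonneg _ _ hhalf hhalf]; norm_num
      _ ≤ a + b := max_le_add_of_nonneg zero_le zero_le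
  calc x ^ (1 / 2 : ℝ) * y ^ (1 / 2 : ℝ) = (ε * x) ^ (1 / 2 : ℝ) * (ε⁻¹ * y) ^ (1 / 2 : ℝ) := by
        rw [mul_rpow_of_nonneg _ _ hhalf, mul_rpow_of_nonneg _ _ hhalf, mul_mul_mul_comm,
          ← mul_rpow_of_nonneg ε ε⁻¹ hhalf, ENNReal.mul_inv_cancel hε hε', one_rpow, one_mul]
    _ ≤ ε * x + ε⁻¹ * y := hamgm _ _

theorem rpow_mul_rpow_half_le {ε : ℝ≥0∞} (hε : ε ≠ 0) (hε' : ε ≠ ⊤) {p : ℝ} (hp : 0 ≤ p)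
    (w A c : ℝ≥0∞) :
    w ^ p * (A ^ (1 / 2 : ℝ) * c) ^ (p / 2) ≤ ε * (w ^ p * A ^ (p / 2)) + ε⁻¹ * (w * c) ^ p := by
  have hp2 : 0 ≤ p / 2 := by positivity
  calc w ^ p * (A ^ (1 / 2 : ℝ) * c) ^ (p / 2)
      = (w ^ (p / 2) * w ^ (p / 2)) * (A ^ (p / 2 * (1 / 2)) * c ^ (p / 2)) := by
        rw [← rpow_add_of_nonneg _ _ hp2 hp2, add_halves, mul_rpow_of_nonneg _ _ hp2, ← rpow_mul,
          mul_comm (1 / 2 : ℝ)]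
    _ = (w ^ p * A ^ (p / 2)) ^ (1 / 2 : ℝ) * ((w * c) ^ p) ^ (1 / 2 : ℝ) := by
        simp only [mul_rpow_of_nonneg _ _ hp, mul_rpow_of_nonneg _ _ (by norm_num : (0:ℝ) ≤ 1 / 2),
          ← rpow_mul]
        ring_nf
    _ ≤ ε * (w ^ p * A ^ (p / 2)) + ε⁻¹ * (w * c) ^ p := rpow_half_mul_rpow_half_le hε hε' _ _

end ENNReal

lemma jap_pos (k : Fin 3 → ℤ) : 0 < jap k := Real.sqrt_pos.mpr (by positivity)

lemma jap_sq (k : Fin 3 → ℤ) : jap k ^ 2 = 1 + ∑ i, ((k i : ℝ)) ^ 2 :=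
  Real.sq_sqrt (by positivity)

lemma abs_le_jap (k : Fin 3 → ℤ) (i : Fin 3) : |(k i : ℝ)| ≤ jap k := by
  refine Real.abs_le_sqrt (le_add_of_nonneg_of_le zero_le_one ?_)
  exact Finset.single_le_sum (f := fun j => ((k j : ℝ)) ^ 2) (fun j _ => sq_nonneg _)
    (Finset.mem_univ i)

lemma jap_add_le_two_mul_max (a b : Fin 3 → ℤ) : jap (a + b) ≤ 2 * max (jap a) (jap b) := by
  have hsum : ∑ i, (((a + b) i : ℤ) : ℝ) ^ 2 ≤
      2 * ∑ i, ((a i : ℝ)) ^ 2 + 2 * ∑ i, ((b i : ℝ)) ^ 2 := by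
    rw [Finset.mul_sum, Finset.mul_sum, ← Finset.sum_add_distrib]
    gcongr with i
    simp only [Pi.add_apply, Int.cast_add]
    nlinarith [sq_nonneg ((a i : ℝ) - b i)]
  have ha' := le_max_left (jap a) (jap b)
  have ha := pow_le_pow_left₀ (jap_pos a).le ha' 2
  have hb := pow_le_pow_left₀ (jap_pos b).le (le_max_right (jap a) (jap b)) 2
  refine Real.sqrt_le_iff.mpr ⟨mul_nonneg zero_le_two ((jap_pos a).le.trans ha'), ?_⟩
  nlinarith [jap_sq a, jap_sq b]

lemma japE_rpow_add_le {ζ : ℝ} (hζ : 0 ≤ ζ) (a b : Fin 3 → ℤ) :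
    japE (a + b) ^ ζ ≤ 2 ^ ζ * (japE a ^ ζ + japE b ^ ζ) := by
  have h : japE (a + b) ≤ 2 * max (japE a) (japE b) := by
    simpa [japE, ENNReal.ofReal_mul, ENNReal.ofReal_max] using
      ENNReal.ofReal_le_ofReal (jap_add_le_two_mul_max a b)
  calc japE (a + b) ^ ζ ≤ (2 * max (japE a) (japE b)) ^ ζ := ENNReal.rpow_le_rpow h hζ
    _ = 2 ^ ζ * max (japE a ^ ζ) (japE b ^ ζ) := by
      rw [ENNReal.mul_rpow_of_nonneg _ _ hζ, (ENNReal.monotone_rpow_of_nonneg hζ).map_max]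
    _ ≤ 2 ^ ζ * (japE a ^ ζ + japE b ^ ζ) := by
      gcongr; exact max_le_add_of_nonneg zero_le zero_le

lemma summable_jap_rpow_neg {r : ℝ} (hr : 3 < r) :
    Summable fun k : Fin 3 → ℤ => jap k ^ (-r) := by
  let L := Submodule.span ℤ (Set.range (Pi.basisFun ℝ (Fin 3)))
  have hL : Summable fun z : L => ‖z‖ ^ (-r) :=
    ZLattice.summable_norm_rpow L (-r) (by rw [ZLattice.rank ℝ L]; simp; linarith)
  have hmem : ∀ k : Fin 3 → ℤ, (fun i => (k i : ℝ)) ∈ L := fun k =>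
    (Submodule.mem_span_range_iff_exists_fun ℤ).mpr ⟨k, by ext j; simp [Pi.single_apply]⟩
  let ι : (Fin 3 → ℤ) → L := fun k => ⟨fun i => k i, hmem k⟩
  have hι : Function.Injective ι := fun k l h =>
    funext fun i => by simpa [ι] using congrFun (congrArg Subtype.val h) i
  refine (hL.comp_injective hι).of_norm_bounded_eventually ?_
  filter_upwards [(Set.finite_singleton (0 : Fin 3 → ℤ)).compl_mem_cofinite] with k hk
  have hpos : 0 < ‖ι k‖ := norm_pos_iff.mpr fun h0 =>
    hk (hι (h0.trans (Subtype.ext (funext fun i => by simp [ι]))))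
  have hle : ‖ι k‖ ≤ jap k :=
    (pi_norm_le_iff_of_nonneg (jap_pos k).le).mpr fun i =>
      (Real.norm_eq_abs _).trans_le (abs_le_jap k i)
  rw [Real.norm_of_nonneg (Real.rpow_nonneg (jap_pos k).le _)]
  exact Real.rpow_le_rpow_of_nonpos hpos hle (by linarith)

lemma tsum_japE_rpow_neg_ne_top {r : ℝ} (hr : 3 < r) : ∑' k, japE k ^ (-r) ≠ ⊤ := by
  simp_rw [japE, ENNReal.ofReal_rpow_of_pos (jap_pos _)]
  rw [← ENNReal.ofReal_tsum_of_nonneg (fun k => Real.rpow_nonneg (jap_pos k).le _)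
    (summable_jap_rpow_neg hr)]
  exact ENNReal.ofReal_ne_top

lemma exists_tsum_japE_conv_rpow_le {p ζ : ℝ} (hp : 1 < p) (hζ : 3 * (1 - 1 / p) < ζ) :
    ∃ C : ℝ≥0∞, C ≠ ⊤ ∧ ∀ f g : (Fin 3 → ℤ) → ℝ≥0∞,
      ∑' k, (japE k ^ ζ * ∑' l, f (k - l) * g l) ^ p ≤
        C * (∑' k, (japE k ^ ζ * f k) ^ p) * ∑' k, (japE k ^ ζ * g k) ^ p := by
  have hpq := Real.HolderConjugate.conjExponent hp
  set q := p.conjExponent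
  have hq0 := hpq.symm.pos
  rw [one_div, hpq.one_sub_inv, ← div_eq_mul_inv, div_lt_iff₀ hq0] at hζ
  have hζ0 : 0 ≤ ζ := by nlinarith
  have hjap0 : ∀ k, japE k ≠ 0 := fun k => (ENNReal.ofReal_pos.mpr (jap_pos k)).ne'
  refine ⟨(2 * 2 ^ ζ) ^ p * (∑' k, (japE k ^ ζ) ^ (-q)) ^ (p / q), ?_,
    ENNReal.tsum_weight_mul_conv_rpow_le hpq
      (fun k => (ENNReal.rpow_pos (pos_iff_ne_zero.mpr (hjap0 k)) ENNReal.ofReal_ne_top).ne')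
      (fun k => ENNReal.rpow_ne_top_of_nonneg hζ0 ENNReal.ofReal_ne_top)
      (fun k l => by simpa using japE_rpow_add_le hζ0 (k - l) l)⟩
  simp_rw [← ENNReal.rpow_mul, mul_neg]
  have h2ζ : (2 : ℝ≥0∞) ^ ζ ≠ ⊤ := ENNReal.rpow_ne_top_of_nonneg hζ0 ENNReal.ofNat_ne_top
  exact ENNReal.mul_ne_top
    (ENNReal.rpow_ne_top_of_nonneg hpq.nonneg (ENNReal.mul_ne_top ENNReal.ofNat_ne_top h2ζ))
    (ENNReal.rpow_ne_top_of_nonneg (by positivity) (tsum_japE_rpow_neg_ne_top hζ))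

noncomputable def timeSup (T : ℝ) (F : ℝ → (Fin 3 → ℤ) → ℝ) (k : Fin 3 → ℤ) : ℝ≥0∞ :=
  ⨆ τ ∈ Set.Icc (0 : ℝ) T, ENNReal.ofReal (F τ k)

noncomputable def timeL2Norm (T : ℝ) (G : ℝ → (Fin 3 → ℤ) → ℝ) (k : Fin 3 → ℤ) : ℝ≥0∞ :=
  (∫⁻ τ in Set.Icc (0 : ℝ) T, ENNReal.ofReal (G τ k) ^ 2) ^ (1 / 2 : ℝ)

lemma Anorm_rpow {ζ p : ℝ} (hp : 0 < p) (T : ℝ) (F : ℝ → (Fin 3 → ℤ) → ℝ) :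
    Anorm ζ p T F ^ p = ∑' k, (japE k ^ ζ * timeSup T F k) ^ p := by
  simp_rw [Anorm, timeSup, ← ENNReal.rpow_mul, one_div_mul_cancel hp.ne', ENNReal.rpow_one,
    ENNReal.mul_rpow_of_nonneg _ _ hp.le, ← ENNReal.rpow_mul]

lemma Bnorm_rpow {ζ p : ℝ} (hp : 0 < p) (T : ℝ) (G : ℝ → (Fin 3 → ℤ) → ℝ) :
    Bnorm ζ p T G ^ p = ∑' k, (japE k ^ ζ * timeL2Norm T G k) ^ p := by
  simp_rw [Bnorm, timeL2Norm, ← ENNReal.rpow_mul, one_div_mul_cancel hp.ne', ENNReal.rpow_one,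
    ENNReal.mul_rpow_of_nonneg _ _ hp.le, ← ENNReal.rpow_mul, one_div_mul_eq_div]

lemma japE_rpow_mul_lintegral_conv_le {ε : ℝ≥0∞} (hε : ε ≠ 0) (hε' : ε ≠ ⊤) {ζ p : ℝ}
    (hp : 0 ≤ p) {T : ℝ} {H F G : ℝ → (Fin 3 → ℤ) → ℝ} (hH : ∀ k, Measurable fun τ => H τ k)
    (hG : ∀ k, Measurable fun τ => G τ k) (k : Fin 3 → ℤ) :
    japE k ^ (ζ * p) * (∫⁻ τ in Set.Icc (0 : ℝ) T, ENNReal.ofReal (H τ k) *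
        ∑' l, ENNReal.ofReal (F τ (k - l)) * ENNReal.ofReal (G τ l)) ^ (p / 2) ≤
      ε * (japE k ^ (ζ * p) * (∫⁻ τ in Set.Icc (0 : ℝ) T, ENNReal.ofReal (H τ k) ^ 2) ^ (p / 2)) +
        ε⁻¹ * (japE k ^ ζ * ∑' l, timeSup T F (k - l) * timeL2Norm T G l) ^ p := by
  rw [ENNReal.rpow_mul]
  calc _ ≤ (japE k ^ ζ) ^ p *
        ((∫⁻ τ in Set.Icc (0 : ℝ) T, ENNReal.ofReal (H τ k) ^ 2) ^ (1 / 2 : ℝ) *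
          ∑' l, timeSup T F (k - l) * timeL2Norm T G l) ^ (p / 2) := by
        gcongr
        exact ENNReal.lintegral_mul_tsum_mul_le measurableSet_Icc
          (hH k).ennreal_ofReal.aemeasurable _ fun l => (hG l).ennreal_ofReal.aemeasurable
    _ ≤ _ := ENNReal.rpow_mul_rpow_half_le hε hε' hp _ _ _

theorem stmt6_general (p ζ T : ℝ) (hp : 1 < p) (hζ : 3 * (1 - 1 / p) < ζ)
    (η : ℝ) (hη : 0 < η) :
    ∃ Cη : ℝ, 0 < Cη ∧ ∀ H F G : ℝ → (Fin 3 → ℤ) → ℝ,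
      (∀ k, ∀ τ ∈ Set.Icc (0 : ℝ) T, 0 ≤ H τ k) →
      (∀ k, ∀ τ ∈ Set.Icc (0 : ℝ) T, 0 ≤ F τ k) →
      (∀ k, ∀ τ ∈ Set.Icc (0 : ℝ) T, 0 ≤ G τ k) →
      (∀ k, Measurable fun τ => H τ k) →
      (∀ k, Measurable fun τ => F τ k) →
      (∀ k, Measurable fun τ => G τ k) →
      (∑' k, japE k ^ (ζ * p) *
          (∫⁻ τ in Set.Icc (0 : ℝ) T,
            ENNReal.ofReal (H τ k) *
              ∑' l, ENNReal.ofReal (F τ (k - l)) * ENNReal.ofReal (G τ l)) ^ (p / 2)) ≤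
        ENNReal.ofReal η *
            (∑' k, japE k ^ (ζ * p) *
              (∫⁻ τ in Set.Icc (0 : ℝ) T, ENNReal.ofReal (H τ k) ^ 2) ^ (p / 2)) +
          ENNReal.ofReal Cη * Anorm ζ p T F ^ p * Bnorm ζ p T G ^ p := by
  have hp0 : 0 < p := by linarith
  obtain ⟨C, hC, hconv⟩ := exists_tsum_japE_conv_rpow_le hp hζ
  set ε := ENNReal.ofReal η
  have hε : ε ≠ 0 := (ENNReal.ofReal_pos.mpr hη).ne'
  have hεC : ε⁻¹ * C ≠ ⊤ := ENNReal.mul_ne_top (ENNReal.inv_ne_top.mpr hε) hC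
  refine ⟨(ε⁻¹ * C).toReal + 1, by positivity, fun H F G _ _ _ hH _ hG => ?_⟩
  refine (ENNReal.tsum_le_tsum fun k =>
    japE_rpow_mul_lintegral_conv_le hε ENNReal.ofReal_ne_top hp0.le hH hG k).trans ?_
  rw [ENNReal.tsum_add, ENNReal.tsum_mul_left, ENNReal.tsum_mul_left, Anorm_rpow hp0,
    Bnorm_rpow hp0, mul_assoc]
  refine add_le_add le_rfl ?_
  calc _ ≤ ε⁻¹ * C * ((∑' k, (japE k ^ ζ * timeSup T F k) ^ p) *
        ∑' k, (japE k ^ ζ * timeL2Norm T G k) ^ p) := by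
        rw [mul_assoc]; gcongr; rw [← mul_assoc]; exact hconv _ _
    _ ≤ _ := by
        gcongr
        exact (ENNReal.ofReal_toReal hεC).symm.le.trans
          (ENNReal.ofReal_le_ofReal (le_add_of_nonneg_right zero_le_one))

/-- Let `p > 1`, `ζ > 3(1-1/p)` and `T > 0`.  For every `η > 0` there is `C_η > 0` such that
for all nonnegative `H, F, G` on `[0,T] × ℤ³`, measurable in time for each `k`,
`∑_k ⟨k⟩^{ζp} (∫_0^T H(τ,k) (∑_l F(τ,k-l) G(τ,l)) dτ)^{p/2}
  ≤ η ∑_k ⟨k⟩^{ζp} (∫_0^T H(τ,k)² dτ)^{p/2} + C_η A_F^p B_G^p`. -/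
theorem stmt6 (p ζ T : ℝ) (hp : 1 < p) (hζ : 3 * (1 - 1 / p) < ζ) (hT : 0 < T)
    (η : ℝ) (hη : 0 < η) :
    ∃ Cη : ℝ, 0 < Cη ∧ ∀ H F G : ℝ → (Fin 3 → ℤ) → ℝ,
      (∀ k, ∀ τ ∈ Set.Icc (0 : ℝ) T, 0 ≤ H τ k) →
      (∀ k, ∀ τ ∈ Set.Icc (0 : ℝ) T, 0 ≤ F τ k) →
      (∀ k, ∀ τ ∈ Set.Icc (0 : ℝ) T, 0 ≤ G τ k) →
      (∀ k, Measurable fun τ => H τ k) →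
      (∀ k, Measurable fun τ => F τ k) →
      (∀ k, Measurable fun τ => G τ k) →
      (∑' k, japE k ^ (ζ * p) *
          (∫⁻ τ in Set.Icc (0 : ℝ) T,
            ENNReal.ofReal (H τ k) *
              ∑' l, ENNReal.ofReal (F τ (k - l)) * ENNReal.ofReal (G τ l)) ^ (p / 2)) ≤
        ENNReal.ofReal η *
            (∑' k, japE k ^ (ζ * p) *
              (∫⁻ τ in Set.Icc (0 : ℝ) T, ENNReal.ofReal (H τ k) ^ 2) ^ (p / 2)) +
          ENNReal.ofReal Cη * Anorm ζ p T F ^ p * Bnorm ζ p T G ^ p :=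
  stmt6_general p ζ T hp hζ η hη
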